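/- Let p₁, …, p₈ be nonnegative reals summing to 1, and let ρ = ∑_{i=1}^8 p_i |GHZ_i⟩⟨GHZ_i| be the GHZ diagonal state on ℂ²⊗ℂ²⊗ℂ² built from the eight GHZ vectors |GHZ₁⟩=(e₀₀₀+e₁₁₁)/√2, |GHZ₂⟩=(e₀₀₀−e₁₁₁)/√2, |GHZ₃⟩=(e₁₀₀+e₀₁₁)/√2, |GHZ₄⟩=(e₁₀₀−e₀₁₁)/√2, |GHZ₅⟩=(e₀₁₀+e₁₀₁)/√2, |GHZ₆⟩=(e₀₁₀−e₁₀₁)/√2, |GHZ₇⟩=(e₁₁₀+e₀₀₁)/√2, |GHZ₈⟩=(e₁₁₀−e₀₀₁)/√2. Let O₁=Z⊗Z⊗1, O₂=Z⊗1⊗Z, O₃=1⊗Z⊗Z, O₄=X⊗X⊗X, O₅=−Y⊗Y⊗X, O₆=−Y⊗X⊗Y, O₇=−X⊗Y⊗Y. Then max_i p_i > 1/2 if and only if ∑_{i=1}^7 |tr(ρ O_i)| > 3. -/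

import Mathlib

open Matrix Kronecker

noncomputable section

/-- The Pauli matrix X. -/
def PauliX : Matrix (Fin 2) (Fin 2) ℂ := !![0, 1; 1, 0]

/-- The Pauli matrix Y. -/
def PauliY : Matrix (Fin 2) (Fin 2) ℂ := !![0, -Complex.I; Complex.I, 0]

/-- The Pauli matrix Z. -/
def PauliZ : Matrix (Fin 2) (Fin 2) ℂ := !![1, 0; 0, -1]

/-- The standard basis vector `e_{abc}` of ℂ²⊗ℂ²⊗ℂ². -/
def eVec (x : Fin 2 × Fin 2 × Fin 2) : Fin 2 × Fin 2 × Fin 2 → ℂ :=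
  fun p => if p = x then 1 else 0

/-- The eight GHZ vectors. -/
def ghzVec : Fin 8 → (Fin 2 × Fin 2 × Fin 2 → ℂ) :=
  ![fun p => (eVec (0, 0, 0) p + eVec (1, 1, 1) p) / (Real.sqrt 2 : ℂ),
    fun p => (eVec (0, 0, 0) p - eVec (1, 1, 1) p) / (Real.sqrt 2 : ℂ),
    fun p => (eVec (1, 0, 0) p + eVec (0, 1, 1) p) / (Real.sqrt 2 : ℂ),
    fun p => (eVec (1, 0, 0) p - eVec (0, 1, 1) p) / (Real.sqrt 2 : ℂ),
    fun p => (eVec (0, 1, 0) p + eVec (1, 0, 1) p) / (Real.sqrt 2 : ℂ),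
    fun p => (eVec (0, 1, 0) p - eVec (1, 0, 1) p) / (Real.sqrt 2 : ℂ),
    fun p => (eVec (1, 1, 0) p + eVec (0, 0, 1) p) / (Real.sqrt 2 : ℂ),
    fun p => (eVec (1, 1, 0) p - eVec (0, 0, 1) p) / (Real.sqrt 2 : ℂ)]

/-- The GHZ diagonal state with mixing weights `p`. -/
def ghzDiagState (p : Fin 8 → ℝ) :
    Matrix (Fin 2 × Fin 2 × Fin 2) (Fin 2 × Fin 2 × Fin 2) ℂ :=
  ∑ i, (p i : ℂ) • Matrix.vecMulVec (ghzVec i) (star (ghzVec i))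

/-- The seven stabilizer observables ZZ1, Z1Z, 1ZZ, XXX, −YYX, −YXY, −XYY. -/
def stabOp : Fin 7 → Matrix (Fin 2 × Fin 2 × Fin 2) (Fin 2 × Fin 2 × Fin 2) ℂ :=
  ![PauliZ ⊗ₖ (PauliZ ⊗ₖ (1 : Matrix (Fin 2) (Fin 2) ℂ)),
    PauliZ ⊗ₖ ((1 : Matrix (Fin 2) (Fin 2) ℂ) ⊗ₖ PauliZ),
    (1 : Matrix (Fin 2) (Fin 2) ℂ) ⊗ₖ (PauliZ ⊗ₖ PauliZ),
    PauliX ⊗ₖ (PauliX ⊗ₖ PauliX),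
    -(PauliY ⊗ₖ (PauliY ⊗ₖ PauliX)),
    -(PauliY ⊗ₖ (PauliX ⊗ₖ PauliY)),
    -(PauliX ⊗ₖ (PauliY ⊗ₖ PauliY))]

/-!
Every GHZ vector is a joint eigenvector of the seven stabilizers, with eigenvalue `ghzSign i j`,
so `tr (ρ Oᵢ) = ∑ⱼ ghzSign i j * pⱼ`. Adjoining an all-ones row makes `ghzSign` an `8 × 8`
Hadamard matrix, so two distinct columns agree in exactly three of the seven rows.
If `pₖ > 1/2`, weighting the expectations by the signs of column `k` gives
`∑ᵢ |tr (ρ Oᵢ)| ≥ 8 pₖ - 1 > 3`. Conversely, for fixed signs `εᵢ` the sum `∑ᵢ εᵢ tr (ρ Oᵢ)` is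
linear in `p`; on the polytope `0 ≤ pⱼ ≤ 1/2`, `∑ pⱼ = 1` it is bounded by its values at the
vertices `(eₐ + e_b)/2`, which are at most half the number of rows where columns `a` and `b`
agree, i.e. `3`.
-/

open Finset

/-- The columns of `s` are the vertices of a regular simplex with `±1` coordinates, e.g. a
normalized Hadamard matrix with its all-ones row removed. -/
structure IsSignSimplex {ι κ : Type*} [Fintype ι] (s : ι → κ → ℝ) : Prop where
  eq_one_or_eq_neg_one : ∀ i j, s i j = 1 ∨ s i j = -1
  sum_mul_eq_neg_one : ∀ a b, a ≠ b → ∑ i, s i a * s i b = -1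

lemma sum_mul_le_of_add_le {κ : Type*} [Fintype κ] {c p : κ → ℝ} {M : ℝ}
    (hc : ∀ a b, a ≠ b → c a + c b ≤ 2 * M) (hp : ∀ j, 0 ≤ p j) (hsum : ∑ j, p j = 1)
    (hhalf : ∀ j, p j ≤ 1 / 2) : ∑ j, c j * p j ≤ M := by
  classical
  by_cases hle : ∀ j, c j ≤ M
  · calc ∑ j, c j * p j ≤ ∑ j, M * p j := sum_le_sum fun j _ => by gcongr; exacts [hp j, hle j]
      _ = M := by rw [← mul_sum, hsum, mul_one]
  obtain ⟨k, hk⟩ : ∃ k, M < c k := by simpa using hle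
  rw [← add_sum_erase _ _ (mem_univ k)] at hsum ⊢
  have hrest : ∑ j ∈ univ.erase k, c j * p j ≤ (2 * M - c k) * (1 - p k) := by
    rw [← eq_sub_of_add_eq' hsum, mul_sum]
    exact sum_le_sum fun j hj => by nlinarith [hp j, hc j k (ne_of_mem_erase hj)]
  nlinarith [hhalf k]

namespace IsSignSimplex

variable {ι κ : Type*} [Fintype ι] {s : ι → κ → ℝ}

lemma sum_mul_eq [DecidableEq κ] (hs : IsSignSimplex s) (a b : κ) :
    ∑ i, s i a * s i b = if a = b then (Fintype.card ι : ℝ) else -1 := by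
  split_ifs with hab
  · subst hab
    have hsq : ∀ i, s i a * s i a = 1 := fun i => by
      rcases hs.eq_one_or_eq_neg_one i a with h | h <;> simp [h]
    simp [hsq]
  · exact hs.sum_mul_eq_neg_one a b hab

lemma abs_add_eq (hs : IsSignSimplex s) (i : ι) (a b : κ) :
    |s i a + s i b| = 1 + s i a * s i b := by
  rcases hs.eq_one_or_eq_neg_one i a with ha | ha <;>
    rcases hs.eq_one_or_eq_neg_one i b with hb | hb <;> norm_num [ha, hb]

variable [Fintype κ]

lemma le_sum_abs (hs : IsSignSimplex s) {p : κ → ℝ} (hsum : ∑ j, p j = 1) (k : κ) :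
    (Fintype.card ι + 1) * p k - 1 ≤ ∑ i, |∑ j, s i j * p j| := by
  classical
  have hcol : ∀ j, (∑ i, s i k * s i j) * p j =
      (Fintype.card ι + 1) * (if k = j then p j else 0) - p j := fun j => by
    rw [hs.sum_mul_eq]; split_ifs <;> ring
  calc (Fintype.card ι + 1) * p k - 1 = ∑ j, (∑ i, s i k * s i j) * p j := by
        simp only [hcol, sum_sub_distrib, ← mul_sum, sum_ite_eq, mem_univ, if_true, hsum]
    _ = ∑ i, s i k * ∑ j, s i j * p j := by
        simp only [sum_mul, mul_sum]; rw [sum_comm]; simp only [mul_assoc]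
    _ ≤ ∑ i, |∑ j, s i j * p j| := sum_le_sum fun i _ => by
        rcases hs.eq_one_or_eq_neg_one i k with h | h <;> simp [h, le_abs_self, neg_le_abs]

lemma sum_abs_le (hs : IsSignSimplex s) {p : κ → ℝ} (hp : ∀ j, 0 ≤ p j)
    (hsum : ∑ j, p j = 1) (hhalf : ∀ j, p j ≤ 1 / 2) :
    ∑ i, |∑ j, s i j * p j| ≤ (Fintype.card ι - 1) / 2 := by
  set ε : ι → ℝ := fun i => if 0 ≤ ∑ j, s i j * p j then 1 else -1
  have habs : ∀ i, |∑ j, s i j * p j| = ε i * ∑ j, s i j * p j := fun i => by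
    simp only [ε]; split_ifs with h
    · rw [abs_of_nonneg h, one_mul]
    · rw [abs_of_neg (not_le.mp h), neg_one_mul]
  have hε : ∀ i x, ε i * x ≤ |x| := fun i x => by
    simp only [ε]; split_ifs
    · rw [one_mul]; exact le_abs_self x
    · rw [neg_one_mul]; exact neg_le_abs x
  calc ∑ i, |∑ j, s i j * p j| = ∑ j, (∑ i, ε i * s i j) * p j := by
        simp only [habs, sum_mul, mul_sum]; rw [sum_comm]; simp only [mul_assoc]
    _ ≤ (Fintype.card ι - 1) / 2 := by
        refine sum_mul_le_of_add_le (fun a b hab => ?_) hp hsum hhalf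
        calc ∑ i, ε i * s i a + ∑ i, ε i * s i b = ∑ i, ε i * (s i a + s i b) := by
              rw [← sum_add_distrib]; simp only [mul_add]
          _ ≤ ∑ i, |s i a + s i b| := sum_le_sum fun i _ => hε i _
          _ = 2 * ((Fintype.card ι - 1) / 2) := by
              simp only [hs.abs_add_eq, sum_add_distrib, hs.sum_mul_eq_neg_one a b hab,
                sum_const, card_univ, nsmul_eq_mul, mul_one]
              ring

end IsSignSimplex

lemma trace_vecMulVec_mul {n R : Type*} [Fintype n] [CommSemiring R] (u w : n → R)
    (O : Matrix n n R) : (vecMulVec u w * O).trace = w ⬝ᵥ (O *ᵥ u) := by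
  rw [vecMulVec_mul, trace_vecMulVec, dotProduct_comm, dotProduct_mulVec]

lemma trace_ghzDiagState_mul (p : Fin 8 → ℝ)
    (O : Matrix (Fin 2 × Fin 2 × Fin 2) (Fin 2 × Fin 2 × Fin 2) ℂ) :
    (ghzDiagState p * O).trace = ∑ j, (p j : ℂ) * (star (ghzVec j) ⬝ᵥ (O *ᵥ ghzVec j)) := by
  simp only [ghzDiagState, sum_mul, trace_sum, smul_mul, trace_smul, trace_vecMulVec_mul,
    smul_eq_mul]

lemma dotProduct_mulVec_eVec_pair (a b : Fin 2 × Fin 2 × Fin 2) (c : ℂ)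
    (O : Matrix (Fin 2 × Fin 2 × Fin 2) (Fin 2 × Fin 2 × Fin 2) ℂ) :
    star (fun p => (eVec a p + c * eVec b p) / (Real.sqrt 2 : ℂ)) ⬝ᵥ
      (O *ᵥ fun p => (eVec a p + c * eVec b p) / (Real.sqrt 2 : ℂ)) =
      (O a a + c * O a b + star c * O b a + star c * c * O b b) / 2 := by
  have hv : (fun p => (eVec a p + c * eVec b p) / (Real.sqrt 2 : ℂ)) =
      (Real.sqrt 2 : ℂ)⁻¹ • (Pi.single a 1 + c • Pi.single b 1) := by
    funext q; simp [eVec, Pi.single_apply, div_eq_inv_mul]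
  have hnorm : star (Real.sqrt 2 : ℂ)⁻¹ * (Real.sqrt 2 : ℂ)⁻¹ = 1 / 2 := by
    rw [star_inv₀, Complex.star_def, Complex.conj_ofReal, ← mul_inv, ← Complex.ofReal_mul,
      Real.mul_self_sqrt zero_le_two]
    norm_num
  rw [hv]
  simp only [star_smul, star_add, Pi.star_single, star_one, smul_dotProduct, dotProduct_smul,
    mulVec_smul, mulVec_add, dotProduct_add, add_dotProduct, mulVec_single_one,
    single_one_dotProduct, smul_eq_mul, col_apply]
  linear_combination (O a a + c * O a b + star c * O b a + star c * c * O b b) * hnorm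

lemma dotProduct_mulVec_eVec_add (a b : Fin 2 × Fin 2 × Fin 2)
    (O : Matrix (Fin 2 × Fin 2 × Fin 2) (Fin 2 × Fin 2 × Fin 2) ℂ) :
    star (fun p => (eVec a p + eVec b p) / (Real.sqrt 2 : ℂ)) ⬝ᵥ
      (O *ᵥ fun p => (eVec a p + eVec b p) / (Real.sqrt 2 : ℂ)) =
      (O a a + O a b + O b a + O b b) / 2 := by
  simpa using dotProduct_mulVec_eVec_pair a b 1 O

lemma dotProduct_mulVec_eVec_sub (a b : Fin 2 × Fin 2 × Fin 2)
    (O : Matrix (Fin 2 × Fin 2 × Fin 2) (Fin 2 × Fin 2 × Fin 2) ℂ) :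
    star (fun p => (eVec a p - eVec b p) / (Real.sqrt 2 : ℂ)) ⬝ᵥ
      (O *ᵥ fun p => (eVec a p - eVec b p) / (Real.sqrt 2 : ℂ)) =
      (O a a - O a b - O b a + O b b) / 2 := by
  simpa [← sub_eq_add_neg, sub_sub] using dotProduct_mulVec_eVec_pair a b (-1) O

def ghzSign : Matrix (Fin 7) (Fin 8) ℝ :=
  !![1, 1, -1, -1, -1, -1, 1, 1;
     1, 1, -1, -1, 1, 1, -1, -1;
     1, 1, 1, 1, -1, -1, -1, -1;
     1, -1, 1, -1, 1, -1, 1, -1;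
     1, -1, -1, 1, -1, 1, 1, -1;
     1, -1, -1, 1, 1, -1, -1, 1;
     1, -1, 1, -1, -1, 1, -1, 1]

lemma isSignSimplex_ghzSign : IsSignSimplex ghzSign where
  eq_one_or_eq_neg_one i j := by
    fin_cases i <;> fin_cases j <;> simp [ghzSign]
  sum_mul_eq_neg_one a b hab := by
    fin_cases a <;> fin_cases b <;> simp_all [ghzSign, Fin.sum_univ_seven]

lemma star_ghzVec_dotProduct_stabOp_mulVec (i : Fin 7) (j : Fin 8) :
    star (ghzVec j) ⬝ᵥ (stabOp i *ᵥ ghzVec j) = ghzSign i j := by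
  fin_cases j <;>
    simp only [ghzVec, Fin.reduceFinMk, Matrix.cons_val, dotProduct_mulVec_eVec_add,
      dotProduct_mulVec_eVec_sub] <;>
    fin_cases i <;>
    simp only [stabOp, ghzSign, of_apply, Fin.reduceFinMk, Matrix.cons_val, kroneckerMap_apply] <;>
    norm_num [PauliX, PauliY, PauliZ]

lemma trace_ghzDiagState_mul_stabOp (p : Fin 8 → ℝ) (i : Fin 7) :
    (ghzDiagState p * stabOp i).trace = ((∑ j, ghzSign i j * p j : ℝ) : ℂ) := by
  simp only [trace_ghzDiagState_mul, star_ghzVec_dotProduct_stabOp_mulVec]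
  push_cast
  simp only [mul_comm]

/-- A GHZ diagonal state has some weight exceeding 1/2 (i.e. is genuinely tripartite entangled)
iff the sum of the absolute expectations of the seven stabilizers exceeds 3. -/
theorem stmt_17 (p : Fin 8 → ℝ) (hp : ∀ i, 0 ≤ p i) (hsum : ∑ i, p i = 1) :
    (∃ i, 1 / 2 < p i) ↔
      3 < ∑ i : Fin 7, ‖(ghzDiagState p * stabOp i).trace‖ := by
  simp only [trace_ghzDiagState_mul_stabOp, Complex.norm_real, Real.norm_eq_abs]
  constructor
  · rintro ⟨k, hk⟩
    have hlower := isSignSimplex_ghzSign.le_sum_abs hsum k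
    norm_num at hlower
    linarith
  · intro hgt
    by_contra! hhalf
    have hupper := isSignSimplex_ghzSign.sum_abs_le hp hsum hhalf
    norm_num at hupper
    linarith

end
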